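/- Define a sequence of lists L_0 = [3] and L_{k+1} obtained from L_k by adding 1 to every entry and then interleaving 3s: inserting a 3 between every pair of consecutive entries and prepending and appending a 3 (so L_{k+1} has length 2·|L_k|+1). Then for every k and every i with 1 ≤ i ≤ 2^{k+1} − 1, the i-th entry of L_k equals v_2(8i). -/
import Mathlib


/-- The turn-sequence lists of the Lévy dragon: `L 0 = [3]`, and `L (k+1)` is obtained
from `L k` by adding 1 to each entry and interleaving 3s (a 3 between every pair of
consecutive entries, plus one prepended and one appended). -/
def levyList : ℕ → List ℕ
  | 0 => [3]
  | k + 1 => (List.flatten ((levyList k).map (fun a => [3, a + 1]))) ++ [3]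

lemma levy_aux (l : List ℕ) (n : ℕ) (hn : n < 2 * l.length + 1) :
    ((List.flatten (l.map (fun a => [3, a + 1]))) ++ [3]).getD n 0 =
      if n % 2 = 0 then 3 else l.getD (n / 2) 0 + 1 := by
  induction l generalizing n with
  | nil =>
    simp at hn
    subst hn
    simp
  | cons a t ih =>
    match n with
    | 0 => simp
    | 1 => simp
    | n + 2 =>
      have hn' : n < 2 * t.length + 1 := by
        simp [List.length_cons] at hn
        omega
      have := ih n hn'
      simp only [List.map_cons, List.flatten_cons, List.cons_append, List.getD_cons_succ, List.nil_append] at *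
      rw [this]
      have h2 : (n + 2) % 2 = n % 2 := by omega
      have h3 : (n + 2) / 2 = n / 2 + 1 := by omega
      rw [h2, h3]
      rcases Nat.even_or_odd n with he | ho
      · simp [Nat.even_iff.mp he]
      · simp [Nat.odd_iff.mp ho]

lemma levy_length (k : ℕ) : (levyList k).length = 2 ^ (k + 1) - 1 := by
  induction k with
  | zero => simp [levyList]
  | succ k ih =>
    have h2 : (1:ℕ) ≤ 2 ^ (k + 1) := Nat.one_le_two_pow
    simp [levyList, List.length_flatten, ih, Function.comp]
    have : ((levyList k).map (List.length ∘ fun a => [3, a + 1])).sum = 2 * (levyList k).length := by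
      induction levyList k with
      | nil => simp
      | cons a t iht => simp [iht]; ring
    rw [this, ih]
    rw [pow_succ]
    omega

theorem levyList_eq_padicValNat (k i : ℕ) (h1 : 1 ≤ i) (h2 : i ≤ 2 ^ (k + 1) - 1) :
    (levyList k).getD (i - 1) 0 = padicValNat 2 (8 * i) := by
  induction k generalizing i with
  | zero =>
    interval_cases i
    haveI : Fact (Nat.Prime 2) := ⟨Nat.prime_two⟩
    simp [levyList]
    rw [show (8:ℕ) = 2 ^ 3 from rfl, padicValNat.prime_pow]
  | succ k ih =>
    have h2p : (1:ℕ) ≤ 2 ^ (k + 1) := Nat.one_le_two_pow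
    have hn : i - 1 < 2 * (levyList k).length + 1 := by
      rw [levy_length]
      have : (2:ℕ) ^ (k + 1 + 1) = 2 * 2 ^ (k + 1) := by ring
      omega
    rw [show levyList (k + 1) = (List.flatten ((levyList k).map (fun a => [3, a + 1]))) ++ [3] from rfl]
    rw [levy_aux _ _ hn]
    rcases Nat.even_or_odd i with he | ho
    · -- i even: (i-1) % 2 = 1
      obtain ⟨j, hj⟩ := he
      have hj2 : i = 2 * j := by omega
      have hji : 1 ≤ j := by omega
      have hjle : j ≤ 2 ^ (k + 1) - 1 := by
        have : (2:ℕ) ^ (k + 1 + 1) = 2 * 2 ^ (k + 1) := by ring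
        omega
      have hmod : (i - 1) % 2 = 1 := by omega
      have hdiv : (i - 1) / 2 = j - 1 := by omega
      rw [hmod, hdiv]
      rw [if_neg (by norm_num : ¬(1:ℕ) % 2 = 0)]
      rw [ih j hji hjle]
      haveI : Fact (Nat.Prime 2) := ⟨Nat.prime_two⟩
      have h8i : 8 * i = 2 * (8 * j) := by omega
      have key : padicValNat 2 (8 * i) = padicValNat 2 2 + padicValNat 2 (8 * j) := by
        rw [h8i, padicValNat.mul (by norm_num) (by positivity)]
      rw [key, padicValNat.self (by norm_num)]
      omega
    · -- i odd
      have hmod : (i - 1) % 2 = 0 := by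
        rcases ho with ⟨m, hm⟩; omega
      rw [hmod]
      rw [if_pos rfl]
      haveI : Fact (Nat.Prime 2) := ⟨Nat.prime_two⟩
      rw [padicValNat.mul (by norm_num) (by omega)]
      have h8 : padicValNat 2 8 = 3 := by
        rw [show (8:ℕ) = 2 ^ 3 from rfl, padicValNat.prime_pow]
      have hodd : padicValNat 2 i = 0 := by
        rw [padicValNat.eq_zero_iff]
        right; right
        rw [Nat.odd_iff] at ho
        omega
      omega
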